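/- arXiv:1207.6536 — 7 statements merged into one kernel-verified Lean document; each statement's English description precedes it below -/
import Mathlib

section
/- For n-bit integers x, y, α, β, γ, if for all x the identity (((x + α) mod 2^n) XOR β + γ) mod 2^n = x XOR y holds, then y ≡ β (mod 2^(n−1)). -/
/-!
Fix a bit position `i < n - 1`. Choose `x` with `x + α ≡ β`; the identity at `x` gives
`γ = x ^^^ y`. Now compare it with the identity at `2^i + x`. On the left the addend
`(2^i + β) ^^^ β` is divisible by `2^i`, has bit `i` set and bit `i + 1` equal to `β_i`, so bit
`i + 1` of the left side is `β_i ^^ γ_{i+1} ^^ γ_i`. On the right, bit `i + 1` of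
`(2^i + x) ^^^ y` is `x_{i+1} ^^ x_i ^^ y_{i+1}`. Substituting `γ = x ^^^ y` leaves `y_i = β_i`.
-/

namespace Nat

theorem testBit_one_add (a b : ℕ) :
    (a + b).testBit 1 = (a.testBit 1 ^^ b.testBit 1 ^^ (a.testBit 0 && b.testBit 0)) := by
  simp only [testBit_eq_decide_div_mod_eq, pow_one, pow_zero, Nat.div_one]
  have ha := Nat.mod_lt a (show 0 < 4 by norm_num)
  have hb := Nat.mod_lt b (show 0 < 4 by norm_num)
  have hmod4 : ∀ c : ℕ, c / 2 % 2 = c % 4 / 2 ∧ c % 2 = c % 4 % 2 := fun c => by omega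
  rw [(hmod4 a).1, (hmod4 a).2, (hmod4 b).1, (hmod4 b).2, (hmod4 (a + b)).1, Nat.add_mod a b 4]
  interval_cases a % 4 <;> interval_cases b % 4 <;> decide

theorem testBit_succ_add_of_two_pow_dvd {a i : ℕ} (ha : 2 ^ i ∣ a) (b : ℕ) :
    (a + b).testBit (i + 1) =
      (a.testBit (i + 1) ^^ b.testBit (i + 1) ^^ (a.testBit i && b.testBit i)) := by
  have h := testBit_one_add (a / 2 ^ i) (b / 2 ^ i)
  rw [← Nat.add_div_of_dvd_right ha] at h
  simpa only [testBit_div_two_pow, Nat.add_comm 1, Nat.zero_add] using h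

theorem testBit_succ_two_pow_add (i b : ℕ) :
    (2 ^ i + b).testBit (i + 1) = (b.testBit (i + 1) ^^ b.testBit i) := by
  rw [testBit_succ_add_of_two_pow_dvd dvd_rfl]
  simp

theorem testBit_succ_two_pow_add_mod_xor_add {i n : ℕ} (hin : i + 1 < n) (b c : ℕ) :
    ((((2 ^ i + b) % 2 ^ n) ^^^ b) + c).testBit (i + 1) =
      (b.testBit i ^^ c.testBit (i + 1) ^^ c.testBit i) := by
  have hdvd : 2 ^ i ∣ (2 ^ i + b) % 2 ^ n ^^^ b := by
    apply Nat.dvd_of_mod_eq_zero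
    rw [Nat.xor_mod_two_pow, Nat.mod_mod_of_dvd _ (Nat.pow_dvd_pow 2 (by omega)),
      Nat.add_mod_left, Nat.xor_self]
  rw [testBit_succ_add_of_two_pow_dvd hdvd]
  simp only [testBit_xor, testBit_mod_two_pow, hin, (by omega : i < n), decide_true,
    Bool.true_and, testBit_succ_two_pow_add, testBit_two_pow_add_eq]
  grind

theorem exists_lt_add_mod_eq {N a z : ℕ} (ha : a ≤ N) (hz : z < N) :
    ∃ x < N, (x + a) % N = z := by
  refine ⟨(z + (N - a)) % N, Nat.mod_lt _ (by omega), ?_⟩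
  rw [Nat.mod_add_mod, Nat.add_assoc, Nat.sub_add_cancel ha, Nat.add_mod_right,
    Nat.mod_eq_of_lt hz]

end Nat

theorem stmt_3_general (n : ℕ) (α β γ y : ℕ)
    (hα : α < 2^n) (hβ : β < 2^n) (hγ : γ < 2^n)
    (h : ∀ x : ℕ, x < 2^n → ((((x + α) % 2^n) ^^^ β) + γ) % 2^n = x ^^^ y) :
    y % 2^(n-1) = β % 2^(n-1) := by
  refine Nat.eq_of_testBit_eq fun i => ?_
  simp only [Nat.testBit_mod_two_pow]
  by_cases hi : i < n - 1
  swap; · simp [hi]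
  have hin : i + 1 < n := by omega
  obtain ⟨x, hx, hxα⟩ := Nat.exists_lt_add_mod_eq hα.le hβ
  have hγ_eq : γ = x ^^^ y := by simpa [hxα, Nat.mod_eq_of_lt hγ] using h x hx
  have hshift := h ((2 ^ i + x) % 2 ^ n) (Nat.mod_lt _ (Nat.two_pow_pos n))
  have hz : ((2 ^ i + x) % 2 ^ n + α) % 2 ^ n = (2 ^ i + β) % 2 ^ n := by
    rw [← hxα, Nat.mod_add_mod, Nat.add_mod_mod, Nat.add_assoc]
  rw [hz] at hshift
  have hbit : (β.testBit i ^^ (x.testBit (i + 1) ^^ y.testBit (i + 1)) ^^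
      (x.testBit i ^^ y.testBit i)) = (x.testBit (i + 1) ^^ x.testBit i ^^ y.testBit (i + 1)) := by
    simpa only [Nat.testBit_mod_two_pow, hin, decide_true, Bool.true_and, Nat.testBit_xor,
      Nat.testBit_succ_two_pow_add_mod_xor_add hin, Nat.testBit_succ_two_pow_add, hγ_eq]
      using congrArg (Nat.testBit · (i + 1)) hshift
  simp only [hi, decide_true, Bool.true_and]
  grind

theorem stmt_3 (n : ℕ) (hn : 1 ≤ n) (α β γ y : ℕ)
    (hα : α < 2^n) (hβ : β < 2^n) (hγ : γ < 2^n) (hy : y < 2^n)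
    (h : ∀ x : ℕ, x < 2^n → ((((x + α) % 2^n) ^^^ β) + γ) % 2^n = x ^^^ y) :
    y % 2^(n-1) = β % 2^(n-1) :=
  stmt_3_general n α β γ y hα hβ hγ h
end

section
/- In the carry-bit recursion for the kernel function ỹ = ((α+x) mod 2^n) XOR ((β+x) mod 2^n) XOR α XOR β: if 4α_i + 2β_i + ỹ_i ∈ {1, 7}, then the bit x_i is uniquely determined by x_i = α_i XOR ỹ_{i+1}, regardless of the value of the carry c_i. -/
theorem stmt_6 (a b x c y : Bool)
    (hcase : (a, b, y) = (false, false, true) ∨ (a, b, y) = (true, true, true)) :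
    x = (a ^^ ((((x && a) ^^ (x && c)) ^^ (a && c)) ^^
          (((x && b) ^^ (x && (c ^^ y))) ^^ (b && (c ^^ y))))) := by
  rcases hcase with h | h <;> injections <;> subst_vars <;> cases x <;> cases c <;> rfl
end

section
/- In the carry-bit recursion for the kernel function: if 4α_i + 2β_i + ỹ_i ∈ {3, 5} (i.e., (α_i,β_i,ỹ_i) ∈ {(0,1,1),(1,0,1)}), then the carry bits are uniquely determined by c_i = β_i XOR ỹ_{i+1} and c̃_i = β_i XOR ỹ_{i+1} XOR ỹ_i, regardless of the value of x_i. -/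
theorem stmt_7 (a b x c y : Bool)
    (hcase : (a, b, y) = (false, true, true) ∨ (a, b, y) = (true, false, true)) :
    c = (b ^^ ((((x && a) ^^ (x && c)) ^^ (a && c)) ^^
          (((x && b) ^^ (x && (c ^^ y))) ^^ (b && (c ^^ y))))) ∧
    (c ^^ y) = ((b ^^ ((((x && a) ^^ (x && c)) ^^ (a && c)) ^^
          (((x && b) ^^ (x && (c ^^ y))) ^^ (b && (c ^^ y))))) ^^ y) := by
  rcases hcase with h | h <;> injection h with h1 h2 <;> injection h2 with h2 h3 <;> subst h1 h2 h3 <;> cases x <;> cases c <;> simp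
end

section
/- In the carry-bit recursion for the kernel function: if (α_i, β_i, ỹ_i) ∈ {(0,1,0),(1,0,0)} (i.e., 4α_i + 2β_i + ỹ_i ∈ {2,4}), then the pair (x_i, c_i) is constrained by: ỹ_{i+1} = 0 implies x_i = c_i, and ỹ_{i+1} = 1 implies x_i ≠ c_i. In particular if c_i is known then x_i = ỹ_{i+1} XOR c_i. -/
/-!
With `ỹ_i = 0` the two additions see the same incoming carry `c`, and the two addends
`α_i, β_i` are complementary. A carry is the majority of its three inputs, so it is `x && c`
when the addend bit is `0` and `x || c` when it is `1`; the XOR of these is `x ^^ c`.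
Hence `ỹ_{i+1} = x_i ^^ c_i`, which is all three claims.
-/

namespace Bool

theorem carry_eq_xor (x a c : Bool) :
    Bool.carry x a c = (((x && a) ^^ (x && c)) ^^ (a && c)) := by
  cases x <;> cases a <;> simp [Bool.carry]

theorem carry_xor_carry_not (x a c : Bool) :
    (Bool.carry x a c ^^ Bool.carry x (!a) c) = (x ^^ c) := by
  cases a <;> cases x <;> simp [Bool.carry]

end Bool

theorem stmt_8 (a b x c y : Bool)
    (hcase : (a, b, y) = (false, true, false) ∨ (a, b, y) = (true, false, false)) :
    let y' := ((((x && a) ^^ (x && c)) ^^ (a && c)) ^^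
          (((x && b) ^^ (x && (c ^^ y))) ^^ (b && (c ^^ y))))
    (y' = false → x = c) ∧ (y' = true → x ≠ c) ∧ x = (y' ^^ c) := by
  intro y'
  have hy' : y' = (x ^^ c) := by
    simp only [Prod.mk.injEq] at hcase
    obtain ⟨rfl, rfl, rfl⟩ | ⟨rfl, rfl, rfl⟩ := hcase <;> simp only [y', ← Bool.carry_eq_xor]
    · simpa using Bool.carry_xor_carry_not x false c
    · simpa using Bool.carry_xor_carry_not x true c
  rw [hy']
  exact ⟨fun h => by simpa using h, fun h => by simpa using h, by simp⟩
end

section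
/- Let c_i be the carry bit at position i when adding two independent uniformly random n-bit integers x and α (with c_0 = 0). Then P(c_i = 1) = (2^i − 1)/2^(i+1) for all 0 ≤ i ≤ n−1. -/
/-- The carry bit at position `i` when adding `a` and `x`. -/
def carry (a x : ℕ) : ℕ → Bool
  | 0 => false
  | i + 1 => ((x.testBit i && a.testBit i) ^^ (x.testBit i && carry a x i))
      ^^ (a.testBit i && carry a x i)

/-!
The carry into position `i` is set exactly when the low `i` bits overflow,
`2 ^ i ≤ a % 2 ^ i + x % 2 ^ i`. This depends only on the residues mod `2 ^ i`, each of which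
occurs equally often below `2 ^ n`, so it suffices to count pairs `a, x < 2 ^ i` with
`2 ^ i ≤ a + x`: for fixed `x` there are exactly `x` of them, `2 ^ i (2 ^ i - 1) / 2` in total.
-/

open Finset

theorem carry_eq_decide (a x i : ℕ) : carry a x i = decide (2 ^ i ≤ a % 2 ^ i + x % 2 ^ i) := by
  induction i with
  | zero => simp [carry, Nat.mod_one]
  | succ i ih =>
    have hlt_a := Nat.mod_lt a (Nat.two_pow_pos i)
    have hlt_x := Nat.mod_lt x (Nat.two_pow_pos i)
    rw [carry, ih, Nat.mod_pow_succ, Nat.mod_pow_succ, pow_succ, ← Nat.toNat_testBit,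
      ← Nat.toNat_testBit]
    cases a.testBit i <;> cases x.testBit i <;>
      by_cases h : 2 ^ i ≤ a % 2 ^ i + x % 2 ^ i <;> simp [h] <;> omega

theorem sum_range_mul_comp_mod {M : Type*} [AddCommMonoid M] (f : ℕ → M) (k d : ℕ) :
    ∑ x ∈ range (k * d), f (x % d) = k • ∑ x ∈ range d, f x := by
  induction k with
  | zero => simp
  | succ k ih =>
    rw [Nat.succ_mul, sum_range_add, ih, succ_nsmul]
    congr 1
    refine sum_congr rfl fun x hx => ?_
    rw [Nat.mul_add_mod_self_right, Nat.mod_eq_of_lt (mem_range.mp hx)]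

theorem card_filter_range_le_add {N x : ℕ} (hx : x ≤ N) :
    #{a ∈ range N | N ≤ a + x} = x := by
  have : {a ∈ range N | N ≤ a + x} = Ico (N - x) N := by
    ext a; simp only [mem_filter, mem_range, mem_Ico]; omega
  rw [this, Nat.card_Ico]; omega

theorem card_filter_range_prod_le_add_mul_two (N : ℕ) :
    #{p ∈ range N ×ˢ range N | N ≤ p.2 + p.1} * 2 = N * (N - 1) := by
  rw [card_filter, sum_product, ← sum_range_id_mul_two]
  congr 1
  refine sum_congr rfl fun x hx => ?_
  rw [← card_filter, card_filter_range_le_add (mem_range.mp hx).le]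

theorem card_filter_range_mul_prod_mod (k d : ℕ) (p : ℕ × ℕ → Prop) [DecidablePred p] :
    #{q ∈ range (k * d) ×ˢ range (k * d) | p (q.1 % d, q.2 % d)}
      = k * k * #{q ∈ range d ×ˢ range d | p q} := by
  have inner (x : ℕ) : ∑ y ∈ range (k * d), (if p (x, y % d) then 1 else 0)
      = k * ∑ y ∈ range d, if p (x, y) then 1 else 0 :=
    sum_range_mul_comp_mod (fun y => if p (x, y) then 1 else 0) k d
  simp only [card_filter, sum_product]
  rw [sum_range_mul_comp_mod (fun x => ∑ y ∈ range (k * d), if p (x, y % d) then 1 else 0)]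
  simp only [inner, ← mul_sum, smul_eq_mul, mul_assoc]

theorem stmt_13_general (n : ℕ) (i : ℕ) (hi : i ≤ n - 1) :
    ((((Finset.range (2^n)) ×ˢ (Finset.range (2^n))).filter
        (fun p => carry p.2 p.1 i = true)).card : ℚ) / ((2^n) * (2^n)) =
      (2^i - 1) / 2^(i+1) := by
  obtain ⟨m, rfl⟩ : ∃ m, n = m + i := ⟨n - i, by omega⟩
  have hcarry : ∀ q : ℕ × ℕ, carry q.2 q.1 i = true ↔ 2 ^ i ≤ q.2 % 2 ^ i + q.1 % 2 ^ i := by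
    simp [carry_eq_decide]
  simp only [hcarry, pow_add 2 m i]
  rw [card_filter_range_mul_prod_mod _ _ fun q => 2 ^ i ≤ q.2 + q.1]
  have hcount : (#{q ∈ range (2 ^ i) ×ˢ range (2 ^ i) | 2 ^ i ≤ q.2 + q.1} : ℚ) * 2
      = 2 ^ i * (2 ^ i - 1) := by
    have h := congrArg (Nat.cast : ℕ → ℚ) (card_filter_range_prod_le_add_mul_two (2 ^ i))
    push_cast [Nat.one_le_two_pow] at h
    exact h
  rw [div_eq_div_iff (by positivity) (by positivity)]
  push_cast
  linear_combination (2 ^ m * 2 ^ m * 2 ^ i : ℚ) * hcount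

theorem stmt_13 (n : ℕ) (hn : 1 ≤ n) (i : ℕ) (hi : i ≤ n - 1) :
    ((((Finset.range (2^n)) ×ˢ (Finset.range (2^n))).filter
        (fun p => carry p.2 p.1 i = true)).card : ℚ) / ((2^n) * (2^n)) =
      (2^i - 1) / 2^(i+1) :=
  stmt_13_general n i hi
end

section
/- For n > 2, no single query (α, β) of n-bit integers determines the (n−1) least significant bits of every n-bit x from y = ((α+x) mod 2^n) XOR ((β+x) mod 2^n); i.e., for every (α, β) there exist x ≠ x' with x ≢ x' (mod 2^(n−1)) but yielding the same y. Hence at least 2 queries are needed. -/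
/-!
Translating `x` by `-α` reduces a query to the map `s ↦ s ^^^ ((s + d) % 2^n)` with
`d = β - α`. If `s` and `(s + d) % 2^n` both have bit `k` clear, adding `2^k` to `s` sets
bit `k` in both without a carry, so the xor does not change. For `k < n - 1` such a pair is
found with `s = 0` as soon as `d` has a clear bit below `n - 1`; otherwise
`d ≡ -1 (mod 2^(n-1))`, `1 + d` is divisible by `2^(n-1) ≥ 4`, and `s = 1`, `k = 1` works.
-/

theorem Nat.add_eq_xor_add_two_mul_and (a b : ℕ) : a + b = (a ^^^ b) + 2 * (a &&& b) := by
  induction a using Nat.strong_induction_on generalizing b with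
  | _ a ih =>
    rcases Nat.eq_zero_or_pos a with rfl | ha
    · simp
    have h := ih (a / 2) (by omega) (b / 2)
    rw [← Nat.xor_div_two, ← Nat.and_div_two] at h
    have hxor := Nat.xor_mod_two_eq (m := a) (n := b)
    have hand := Nat.and_mod_two_eq_one (a := a) (b := b)
    omega

theorem Nat.xor_two_pow_of_testBit_eq_false {a k : ℕ} (h : a.testBit k = false) :
    a ^^^ 2 ^ k = a + 2 ^ k := by
  have := Nat.add_eq_xor_add_two_mul_and a (2 ^ k)
  simp only [Nat.and_two_pow, h, Bool.toNat_false, zero_mul, mul_zero, add_zero] at this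
  exact this.symm

theorem add_two_pow_xor_add_mod_two_pow {n k s d : ℕ} (hk : k < n) (hs : s.testBit k = false)
    (ht : ((s + d) % 2 ^ n).testBit k = false) :
    (s + 2 ^ k) ^^^ ((s + 2 ^ k + d) % 2 ^ n) = s ^^^ ((s + d) % 2 ^ n) := by
  set t := (s + d) % 2 ^ n
  have ht_add : (s + 2 ^ k + d) % 2 ^ n = t + 2 ^ k := by
    have hlt : t ^^^ 2 ^ k < 2 ^ n :=
      Nat.xor_lt_two_pow (Nat.mod_lt _ (by positivity)) (Nat.pow_lt_pow_right (by norm_num) hk)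
    rw [Nat.add_right_comm, ← Nat.mod_add_mod, ← Nat.xor_two_pow_of_testBit_eq_false ht,
      Nat.mod_eq_of_lt hlt]
  rw [ht_add, ← Nat.xor_two_pow_of_testBit_eq_false hs,
    ← Nat.xor_two_pow_of_testBit_eq_false ht, Nat.xor_comm t, ← Nat.xor_assoc, Nat.xor_assoc s,
    Nat.xor_self, Nat.xor_zero]

theorem exists_add_two_pow_lt_testBit_eq_false {n : ℕ} (hn : 2 < n) (d : ℕ) :
    ∃ s k, s + 2 ^ k < 2 ^ (n - 1) ∧ s.testBit k = false ∧
      ((s + d) % 2 ^ n).testBit k = false := by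
  by_cases h : ∃ k < n - 1, d.testBit k = false
  · obtain ⟨k, hk, hdk⟩ := h
    refine ⟨0, k, ?_, Nat.zero_testBit k, ?_⟩
    · simpa using Nat.pow_lt_pow_right (by norm_num : 1 < 2) hk
    · rw [Nat.zero_add, Nat.testBit_mod_two_pow, hdk, Bool.and_false]
  · push Not at h
    have hd : d % 2 ^ (n - 1) = 2 ^ (n - 1) - 1 := by
      refine Nat.eq_of_testBit_eq fun i => ?_
      rw [Nat.testBit_mod_two_pow, Nat.testBit_two_pow_sub_one]
      by_cases hi : i < n - 1 <;> simp [hi, h]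
    have h4 : 4 ≤ 2 ^ (n - 1) := by
      simpa using Nat.pow_le_pow_right (by norm_num : 0 < 2) (by omega : 2 ≤ n - 1)
    have hdvd : 2 ^ (n - 1) ∣ 2 ^ n := pow_dvd_pow 2 (Nat.sub_le n 1)
    have hzero : (1 + d) % 2 ^ n % 2 ^ (n - 1) = 0 := by
      rw [Nat.mod_mod_of_dvd _ hdvd, Nat.add_mod, hd]
      simp [show 1 + (2 ^ (n - 1) - 1) = 2 ^ (n - 1) by omega]
    refine ⟨1, 1, by omega, rfl, ?_⟩
    have := Nat.testBit_mod_two_pow ((1 + d) % 2 ^ n) (n - 1) 1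
    rw [hzero, Nat.zero_testBit, decide_eq_true (by omega : 1 < n - 1), Bool.true_and] at this
    exact this.symm

theorem stmt_18_general (n : ℕ) (hn : 2 < n) (α β : ℕ) (hα : α < 2^n) :
    ∃ x x' : ℕ, x < 2^n ∧ x' < 2^n ∧ x % 2^(n-1) ≠ x' % 2^(n-1) ∧
      (((α + x) % 2^n) ^^^ ((β + x) % 2^n)) =
        (((α + x') % 2^n) ^^^ ((β + x') % 2^n)) := by
  set c := 2 ^ n - α
  obtain ⟨s, k, hlt, hs, ht⟩ := exists_add_two_pow_lt_testBit_eq_false hn (β + c)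
  have hk_pos : 0 < 2 ^ k := Nat.two_pow_pos k
  have hk : k < n - 1 := (Nat.pow_lt_pow_iff_right (by norm_num : 1 < 2)).1 (by omega)
  have hlt_n : 2 ^ (n - 1) < 2 ^ n := Nat.pow_lt_pow_right (by norm_num) (by omega)
  have hshift (γ t : ℕ) : (γ + (t + c) % 2 ^ n) % 2 ^ n = (t + (γ + c)) % 2 ^ n := by
    rw [Nat.add_mod_mod, Nat.add_left_comm]
  have hαc : α + c = 2 ^ n := by omega
  refine ⟨(s + c) % 2 ^ n, (s + 2 ^ k + c) % 2 ^ n, Nat.mod_lt _ (by positivity),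
    Nat.mod_lt _ (by positivity), ?_, ?_⟩
  · have hdvd : 2 ^ (n - 1) ∣ 2 ^ n := pow_dvd_pow 2 (Nat.sub_le n 1)
    rw [Nat.mod_mod_of_dvd _ hdvd, Nat.mod_mod_of_dvd _ hdvd]
    intro h
    have := Nat.ModEq.add_right_cancel' c h
    rw [Nat.ModEq, Nat.mod_eq_of_lt (show s < 2 ^ (n - 1) by omega), Nat.mod_eq_of_lt hlt]
      at this
    omega
  · rw [hshift, hshift, hshift, hshift, hαc, Nat.add_mod_right, Nat.add_mod_right,
      Nat.mod_eq_of_lt (show s < 2 ^ n by omega),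
      Nat.mod_eq_of_lt (show s + 2 ^ k < 2 ^ n by omega),
      add_two_pow_xor_add_mod_two_pow (by omega) hs ht]

theorem stmt_18 (n : ℕ) (hn : 2 < n) (α β : ℕ) (hα : α < 2^n) (hβ : β < 2^n) :
    ∃ x x' : ℕ, x < 2^n ∧ x' < 2^n ∧ x % 2^(n-1) ≠ x' % 2^(n-1) ∧
      (((α + x) % 2^n) ^^^ ((β + x) % 2^n)) =
        (((α + x') % 2^n) ^^^ ((β + x') % 2^n)) :=
  stmt_18_general n hn α β hα
end

section
/- For any n ≥ 2 and any n-bit x, the two queries (α, β) and (α', β') given by α = (pattern 00 repeated) = 0, β = (binary pattern ...1010) mod 2^n, α' = (binary pattern ...1010) mod 2^n, β' = (binary pattern ...0101) mod 2^n, determine the (n−1) least significant bits of x from the corresponding responses ỹ = y XOR α XOR β and ỹ' = y' XOR α' XOR β', where y = ((α+x) mod 2^n) XOR ((β+x) mod 2^n) and similarly y'. Thus two chosen queries suffice to recover x modulo 2^(n−1). -/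
/-!
For an addend `a`, the response to the query `(0, a)` is the carry vector of `a + x`, and together
with the response to `(a, ~~~a)` it also gives the carry vector of `~~~a + x`. At every position
exactly one of `a`, `~~~a` has a set bit, so the two carries out of position `i` are `xᵢ ∨ c` and
`xᵢ ∧ e`, where `c`, `e` are the carries in. They determine `xᵢ` unless `c = 1` and `e = 0`. When the
bits of `a` alternate, the roles of `a` and `~~~a` are swapped at position `i - 1`, and a carry out of
the side with the clear bit forces `xᵢ₋₁ = 1`, hence a carry on the other side: the bad case never
occurs. The top bit is lost because the carry out of position `n - 1` is not observed.
-/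

theorem Bool.atLeastTwo_not_eq_of_atLeastTwo_eq (b x c e : Bool) :
    atLeastTwo b x c = !b → atLeastTwo (!b) x e = !b := by
  cases b <;> cases x <;> cases c <;> cases e <;> decide

theorem Bool.eq_of_atLeastTwo_eq_of_atLeastTwo_not_eq {a x x' c e : Bool} (hce : c = a → e = a)
    (h : atLeastTwo a x c = atLeastTwo a x' c) (h' : atLeastTwo (!a) x e = atLeastTwo (!a) x' e) :
    x = x' := by
  revert hce h h'; revert a x x' c e; decide

theorem Nat.testBit_sum_mul_four_pow {a : ℕ} (ha : a < 4) (m i : ℕ) :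
    (∑ j ∈ Finset.range m, a * 4 ^ j).testBit i = (decide (i < 2 * m) && a.testBit (i % 2)) := by
  induction m generalizing i with
  | zero => simp
  | succ m ih =>
    have hsum : ∑ j ∈ Finset.range (m + 1), a * 4 ^ j =
        2 ^ 2 * ∑ j ∈ Finset.range m, a * 4 ^ j + a := by
      rw [Finset.sum_range_succ', Finset.mul_sum]
      simp [pow_succ]
      exact Finset.sum_congr rfl fun j _ => by ring
    rw [hsum, Nat.testBit_two_pow_mul_add _ ha]
    split_ifs with hi
    · interval_cases i <;> simp; omega
    · have hlt : i - 2 < 2 * m ↔ i < 2 * (m + 1) := by omega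
      rw [ih, decide_eq_decide.mpr hlt, show (i - 2) % 2 = i % 2 by omega]

namespace BitVec

variable {w : ℕ}

/-- The response `ỹ = y ⊕ α ⊕ β` to the query `(α, β)`. -/
def queryResponse (a b x : BitVec w) : BitVec w := ((a + x) ^^^ (b + x)) ^^^ a ^^^ b

theorem getLsbD_queryResponse (a b x : BitVec w) {i : ℕ} (hi : i < w) :
    (queryResponse a b x).getLsbD i = (carry i a x false ^^ carry i b x false) := by
  simp only [queryResponse, getLsbD_xor, getLsbD_add hi]
  cases a.getLsbD i <;> cases b.getLsbD i <;> cases x.getLsbD i <;> simp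

theorem toNat_queryResponse {n : ℕ} (a b : BitVec n) (x : ℕ) :
    (queryResponse a b (BitVec.ofNat n x)).toNat =
      ((a.toNat + x) % 2 ^ n ^^^ (b.toNat + x) % 2 ^ n) ^^^ a.toNat ^^^ b.toNat := by
  simp [queryResponse, toNat_add, Nat.add_mod]

section Alternating

variable {A : BitVec w} (hA : ∀ i, i + 1 < w → A.getLsbD (i + 1) = !A.getLsbD i)
include hA

theorem carry_not_eq_getLsbD_of_carry_eq_getLsbD (x : BitVec w) {i : ℕ} (hi : i < w)
    (h : carry i A x false = A.getLsbD i) : carry i (~~~A) x false = A.getLsbD i := by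
  cases i with
  | zero => simpa using h
  | succ i =>
    rw [carry_succ, hA i hi] at h ⊢
    rw [getLsbD_not, decide_eq_true (by omega : i < w), Bool.true_and]
    exact Bool.atLeastTwo_not_eq_of_atLeastTwo_eq _ _ _ _ h

theorem getLsbD_eq_of_carry_eq {x x' : BitVec w}
    (hc : ∀ i < w, carry i A x false = carry i A x' false)
    (hc' : ∀ i < w, carry i (~~~A) x false = carry i (~~~A) x' false)
    {i : ℕ} (hi : i + 1 < w) : x.getLsbD i = x'.getLsbD i := by
  have h := hc (i + 1) hi
  have h' := hc' (i + 1) hi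
  rw [carry_succ, carry_succ, hc i (by omega)] at h
  rw [carry_succ, carry_succ, hc' i (by omega), getLsbD_not, decide_eq_true (by omega : i < w),
    Bool.true_and] at h'
  exact Bool.eq_of_atLeastTwo_eq_of_atLeastTwo_not_eq
    (carry_not_eq_getLsbD_of_carry_eq_getLsbD hA x' (by omega)) h h'

theorem setWidth_pred_eq_of_queryResponse_eq {x x' : BitVec w}
    (h : queryResponse 0 A x = queryResponse 0 A x')
    (h' : queryResponse A (~~~A) x = queryResponse A (~~~A) x') :
    x.setWidth (w - 1) = x'.setWidth (w - 1) := by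
  have hc : ∀ i < w, carry i A x false = carry i A x' false := fun i hi => by
    simpa [getLsbD_queryResponse _ _ _ hi, carry_of_and_eq_zero zero_and]
      using congrArg (getLsbD · i) h
  have hc' : ∀ i < w, carry i (~~~A) x false = carry i (~~~A) x' false := fun i hi => by
    simpa [getLsbD_queryResponse _ _ _ hi, hc i hi] using congrArg (getLsbD · i) h'
  ext i hi
  simpa using getLsbD_eq_of_carry_eq hA hc hc' (by omega : i + 1 < w)

end Alternating

theorem getLsbD_ofNat_sum_mul_four_pow {n a : ℕ} (ha : a < 4) {i : ℕ} (hi : i < n) :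
    (BitVec.ofNat n (∑ j ∈ Finset.range n, a * 4 ^ j)).getLsbD i = a.testBit (i % 2) := by
  rw [getLsbD_ofNat, Nat.testBit_sum_mul_four_pow ha]
  simp [hi, show i < 2 * n by omega]

theorem getLsbD_succ_ofNat_sum_two_mul_four_pow {n i : ℕ} (hi : i + 1 < n) :
    (BitVec.ofNat n (∑ j ∈ Finset.range n, 2 * 4 ^ j)).getLsbD (i + 1) =
      !(BitVec.ofNat n (∑ j ∈ Finset.range n, 2 * 4 ^ j)).getLsbD i := by
  rw [getLsbD_ofNat_sum_mul_four_pow (by norm_num) hi,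
    getLsbD_ofNat_sum_mul_four_pow (by norm_num) (by omega)]
  rcases Nat.mod_two_eq_zero_or_one i with h | h <;> simp [Nat.add_mod, h] <;> decide

theorem ofNat_sum_four_pow_eq_not (n : ℕ) :
    BitVec.ofNat n (∑ j ∈ Finset.range n, 1 * 4 ^ j) =
      ~~~BitVec.ofNat n (∑ j ∈ Finset.range n, 2 * 4 ^ j) := by
  ext i hi
  rw [getElem_not, ← getLsbD_eq_getElem, ← getLsbD_eq_getElem,
    getLsbD_ofNat_sum_mul_four_pow (by norm_num) hi,
    getLsbD_ofNat_sum_mul_four_pow (by norm_num) hi]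
  rcases Nat.mod_two_eq_zero_or_one i with h | h <;> simp [h]
  decide

end BitVec

theorem stmt_19_general (n : ℕ) :
    let α : ℕ := 0
    let β : ℕ := (∑ j ∈ Finset.range n, 2 * 4^j) % 2^n
    let α' : ℕ := (∑ j ∈ Finset.range n, 2 * 4^j) % 2^n
    let β' : ℕ := (∑ j ∈ Finset.range n, 1 * 4^j) % 2^n
    ∀ x x' : ℕ, x < 2^n → x' < 2^n →
      ((((α + x) % 2^n) ^^^ ((β + x) % 2^n)) ^^^ α ^^^ β =
        (((α + x') % 2^n) ^^^ ((β + x') % 2^n)) ^^^ α ^^^ β) →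
      ((((α' + x) % 2^n) ^^^ ((β' + x) % 2^n)) ^^^ α' ^^^ β' =
        (((α' + x') % 2^n) ^^^ ((β' + x') % 2^n)) ^^^ α' ^^^ β') →
      x % 2^(n-1) = x' % 2^(n-1) := by
  intro α β α' β' x x' _ _ h h'
  set A : BitVec n := BitVec.ofNat n (∑ j ∈ Finset.range n, 2 * 4 ^ j)
  have hα : α = (0#n).toNat := BitVec.toNat_zero.symm
  have hβ : β = A.toNat := (BitVec.toNat_ofNat ..).symm
  have hα' : α' = A.toNat := (BitVec.toNat_ofNat ..).symm
  have hβ' : β' = (~~~A).toNat := by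
    rw [← BitVec.ofNat_sum_four_pow_eq_not]
    exact (BitVec.toNat_ofNat ..).symm
  rw [hα, hβ, ← BitVec.toNat_queryResponse, ← BitVec.toNat_queryResponse] at h
  rw [hα', hβ', ← BitVec.toNat_queryResponse, ← BitVec.toNat_queryResponse] at h'
  have hlow := congrArg BitVec.toNat <| BitVec.setWidth_pred_eq_of_queryResponse_eq
    (fun _ hi => BitVec.getLsbD_succ_ofNat_sum_two_mul_four_pow hi)
    (BitVec.toNat_injective h) (BitVec.toNat_injective h')
  simpa [Nat.mod_mod_of_dvd _ (Nat.pow_dvd_pow 2 (Nat.sub_le n 1))] using hlow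

theorem stmt_19 (n : ℕ) (hn : 2 ≤ n) :
    let α : ℕ := 0
    let β : ℕ := (∑ j ∈ Finset.range n, 2 * 4^j) % 2^n
    let α' : ℕ := (∑ j ∈ Finset.range n, 2 * 4^j) % 2^n
    let β' : ℕ := (∑ j ∈ Finset.range n, 1 * 4^j) % 2^n
    ∀ x x' : ℕ, x < 2^n → x' < 2^n →
      ((((α + x) % 2^n) ^^^ ((β + x) % 2^n)) ^^^ α ^^^ β =
        (((α + x') % 2^n) ^^^ ((β + x') % 2^n)) ^^^ α ^^^ β) →
      ((((α' + x) % 2^n) ^^^ ((β' + x) % 2^n)) ^^^ α' ^^^ β' =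
        (((α' + x') % 2^n) ^^^ ((β' + x') % 2^n)) ^^^ α' ^^^ β') →
      x % 2^(n-1) = x' % 2^(n-1) :=
  stmt_19_general n
end
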